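/- arXiv:2410.00254 — 3 statements merged into one kernel-verified Lean document; each statement's English description precedes it below -/
import Mathlib

section
/- Assume in addition that Φ is strictly increasing on [0,∞). Define the signed entropy density 𝚿̃_{Φ,γ}(ξ) = Ψ_{Φ,γ}(ξ) for ξ ≥ γ and 𝚿̃_{Φ,γ}(ξ) = −Ψ_{Φ,γ}(ξ) for ξ ∈ [0,γ], and let Ent_{Φ,γ}(ℝ^d) denote the set of almost-everywhere equivalence classes of nonnegative measurable functions ρ:ℝ^d→ℝ with ∫_{ℝ^d} Ψ_{Φ,γ}(ρ) < ∞, equipped with d(f,g) = ∫_{ℝ^d} |𝚿̃_{Φ,γ}(f) − 𝚿̃_{Φ,γ}(g)|. Then d is a well-defined, finite metric on Ent_{Φ,γ}(ℝ^d), and the metric space (Ent_{Φ,γ}(ℝ^d), d) is complete and separable. -/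
/-!
For `ξ ≥ 0` the signed density is `∫_γ^ξ |log (Φ s / Φ γ)| ds` and `Ψ(ξ) = |Ψ̃(ξ)|`. Hence `Ψ̃` is
continuous and strictly increasing on `[0, ∞)`, and it tends to `∞` because the integrand is at
least `log (Φ (2γ) / Φ γ) > 0` beyond `2γ`. Continued with slope `1` on `(-∞, 0]`, it becomes an
order isomorphism `e` of `ℝ`, and `ρ ↦ e ∘ ρ` embeds `Ent` isometrically into `L¹(ℝ^d)`. Its image
is the set of functions that are a.e. `≥ Ψ̃(0)`, which is closed since `L¹` convergence gives a.e.
convergence along a subsequence; so `Ent` is complete, and separable as a subspace of `L¹`.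
-/

open MeasureTheory

/-- The relative entropy density `Ψ_{Φ,γ}(ξ) = ∫_γ^ξ log(Φ(s)/Φ(γ)) ds`. -/
noncomputable def Psi (Φ : ℝ → ℝ) (γ : ℝ) (ξ : ℝ) : ℝ :=
  ∫ s in γ..ξ, Real.log (Φ s / Φ γ)

/-- The signed entropy density `Ψ̃_{Φ,γ}`. -/
noncomputable def PsiSigned (Φ : ℝ → ℝ) (γ : ℝ) (ξ : ℝ) : ℝ :=
  if γ ≤ ξ then Psi Φ γ ξ else -(Psi Φ γ ξ)

/-- The space `Ent_{Φ,γ}(ℝ^d)` of a.e.-equivalence classes of nonnegative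
measurable functions with finite relative entropy. -/
def Ent (d : ℕ) (Φ : ℝ → ℝ) (γ : ℝ) : Type :=
  {ρ : (EuclideanSpace ℝ (Fin d)) →ₘ[volume] ℝ //
    (∀ᵐ x : EuclideanSpace ℝ (Fin d), 0 ≤ ρ x) ∧
    Integrable (fun x => Psi Φ γ (ρ x)) volume}

open Set Filter Topology

theorem exists_orderIso_eqOn_Ici {G : ℝ → ℝ} (hG : StrictMonoOn G (Ici 0))
    (hGc : ContinuousOn G (Ici 0)) (hGtop : Tendsto G atTop atTop) :
    ∃ e : ℝ ≃o ℝ, EqOn e G (Ici 0) := by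
  set E : ℝ → ℝ := fun ξ => G (max ξ 0) + min ξ 0
  have hE_of_nonneg : EqOn E G (Ici 0) := fun ξ (hξ : 0 ≤ ξ) => by simp [E, hξ]
  have hE_of_nonpos (ξ : ℝ) (hξ : ξ ≤ 0) : E ξ = G 0 + ξ := by simp [E, hξ]
  have hEmono : StrictMono E := by
    intro x y hxy
    rcases le_or_gt y 0 with hy | hy
    · rw [hE_of_nonpos x (hxy.le.trans hy), hE_of_nonpos y hy]; linarith
    · have : G (max x 0) < G y := hG (le_max_right x 0) hy.le (max_lt hxy hy)
      simp only [E, max_eq_left hy.le, min_eq_right hy.le]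
      linarith [min_le_right x 0]
  have hEcont : Continuous E :=
    (hGc.comp_continuous (continuous_id.max continuous_const) fun ξ => le_max_right ξ 0).add
      (continuous_id.min continuous_const)
  have hEsurj : Function.Surjective E := hEcont.surjective
    (hGtop.congr' ((eventually_ge_atTop 0).mono fun ξ hξ => (hE_of_nonneg hξ).symm))
    ((tendsto_atBot_add_const_left _ (G 0) tendsto_id).congr'
      ((eventually_le_atBot 0).mono fun ξ hξ => (hE_of_nonpos ξ hξ).symm))
  exact ⟨hEmono.orderIsoOfSurjective E hEsurj, hE_of_nonneg⟩

section PsiSigned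

variable {Φ : ℝ → ℝ} {γ : ℝ}

theorem strictMonoOn_log_div (hγ : 0 < γ) (hΦpos : ∀ ξ : ℝ, 0 < ξ → 0 < Φ ξ)
    (hmono : StrictMonoOn Φ (Ici 0)) :
    StrictMonoOn (fun s => Real.log (Φ s / Φ γ)) (Ioi 0) := fun s hs _ ht hst =>
  Real.log_lt_log (div_pos (hΦpos s hs) (hΦpos γ hγ))
    (div_lt_div_of_pos_right (hmono (mem_Ici.2 (le_of_lt hs)) (mem_Ici.2 (le_of_lt ht)) hst)
      (hΦpos γ hγ))

theorem intervalIntegrable_log_div (hγ : 0 < γ) (hΦpos : ∀ ξ : ℝ, 0 < ξ → 0 < Φ ξ)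
    (hlog : ∀ R : ℝ, 0 < R → IntervalIntegrable (fun s => Real.log (Φ s)) volume 0 R)
    {a b : ℝ} (ha : 0 ≤ a) (hb : 0 ≤ b) :
    IntervalIntegrable (fun s => Real.log (Φ s / Φ γ)) volume a b := by
  have hR : 0 < max a b + 1 := by positivity
  have h0R : IntervalIntegrable (fun s => Real.log (Φ s / Φ γ)) volume 0 (max a b + 1) := by
    refine ((hlog _ hR).sub (intervalIntegrable_const (c := Real.log (Φ γ)))).congr fun s hs => ?_
    rw [uIoc_of_le hR.le] at hs
    exact (Real.log_div (hΦpos s hs.1).ne' (hΦpos γ hγ).ne').symm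
  refine h0R.mono_set (uIcc_subset_uIcc ?_ ?_) <;>
    rw [uIcc_of_le hR.le] <;> constructor <;> linarith [le_max_left a b, le_max_right a b]

theorem psiSigned_eq_integral_abs (hγ : 0 < γ) (hΦpos : ∀ ξ : ℝ, 0 < ξ → 0 < Φ ξ)
    (hmono : StrictMonoOn Φ (Ici 0)) {ξ : ℝ} (hξ : 0 ≤ ξ) :
    PsiSigned Φ γ ξ = ∫ s in γ..ξ, |Real.log (Φ s / Φ γ)| := by
  have hg := strictMonoOn_log_div hγ hΦpos hmono
  have hgγ := Real.log_div_self (Φ γ)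
  unfold PsiSigned Psi
  split_ifs with h
  · refine intervalIntegral.integral_congr_ae (ae_of_all _ fun s hs => ?_)
    rw [uIoc_of_le h] at hs
    have : 0 < Real.log (Φ s / Φ γ) := hgγ ▸ hg hγ (hγ.trans hs.1) hs.1
    exact (abs_of_pos this).symm
  · rw [← intervalIntegral.integral_neg]
    refine intervalIntegral.integral_congr_ae (ae_of_all _ fun s hs => ?_)
    rw [uIoc_of_ge (not_le.1 h).le] at hs
    have : Real.log (Φ s / Φ γ) ≤ 0 := hgγ ▸ hg.monotoneOn (hξ.trans_lt hs.1) hγ hs.2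
    exact (abs_of_nonpos this).symm

theorem psi_eq_abs_psiSigned (hγ : 0 < γ) (hΦpos : ∀ ξ : ℝ, 0 < ξ → 0 < Φ ξ)
    (hmono : StrictMonoOn Φ (Ici 0)) {ξ : ℝ} (hξ : 0 ≤ ξ) :
    Psi Φ γ ξ = |PsiSigned Φ γ ξ| := by
  have h := psiSigned_eq_integral_abs hγ hΦpos hmono hξ
  by_cases hγξ : γ ≤ ξ
  · have : 0 ≤ PsiSigned Φ γ ξ :=
      h ▸ intervalIntegral.integral_nonneg hγξ fun _ _ => abs_nonneg _
    rw [abs_of_nonneg this, PsiSigned, if_pos hγξ]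
  · have : PsiSigned Φ γ ξ ≤ 0 := by
      rw [h, intervalIntegral.integral_symm, neg_nonpos]
      exact intervalIntegral.integral_nonneg (not_le.1 hγξ).le fun _ _ => abs_nonneg _
    rw [abs_of_nonpos this, PsiSigned, if_neg hγξ, neg_neg]

theorem strictMonoOn_psiSigned (hγ : 0 < γ) (hΦpos : ∀ ξ : ℝ, 0 < ξ → 0 < Φ ξ)
    (hlog : ∀ R : ℝ, 0 < R → IntervalIntegrable (fun s => Real.log (Φ s)) volume 0 R)
    (hmono : StrictMonoOn Φ (Ici 0)) :
    StrictMonoOn (PsiSigned Φ γ) (Ici 0) := by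
  intro a ha b hb hab
  have hint {u v : ℝ} (hu : 0 ≤ u) (hv : 0 ≤ v) :=
    (intervalIntegrable_log_div hγ hΦpos hlog hu hv).abs
  rw [psiSigned_eq_integral_abs hγ hΦpos hmono ha, psiSigned_eq_integral_abs hγ hΦpos hmono hb,
    ← intervalIntegral.integral_add_adjacent_intervals (hint hγ.le ha) (hint ha hb)]
  refine lt_add_of_pos_right _ <|
    (intervalIntegral.integral_pos_iff_support_of_nonneg_ae'
      (ae_of_all _ fun _ => abs_nonneg _) (hint ha hb)).2 ⟨hab, ?_⟩
  have hsupp : Ioc a b \ {γ} ⊆ Function.support (fun s => |Real.log (Φ s / Φ γ)|) ∩ Ioc a b := by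
    rintro s ⟨hs, hsγ : s ≠ γ⟩
    refine ⟨abs_ne_zero.2 fun hzero => hsγ ?_, hs⟩
    exact (strictMonoOn_log_div hγ hΦpos hmono).injOn (lt_of_le_of_lt ha hs.1) hγ
      (hzero.trans (Real.log_div_self (Φ γ)).symm)
  calc (0 : ENNReal) < volume (Ioc a b) := by simpa using hab
    _ = volume (Ioc a b \ {γ}) := (measure_sdiff_null (measure_singleton γ)).symm
    _ ≤ _ := measure_mono hsupp

theorem continuousOn_psiSigned (hγ : 0 < γ) (hΦpos : ∀ ξ : ℝ, 0 < ξ → 0 < Φ ξ)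
    (hlog : ∀ R : ℝ, 0 < R → IntervalIntegrable (fun s => Real.log (Φ s)) volume 0 R)
    (hmono : StrictMonoOn Φ (Ici 0)) :
    ContinuousOn (PsiSigned Φ γ) (Ici 0) := by
  intro x (hx : 0 ≤ x)
  set R := x + γ + 1
  have hR : uIcc 0 R = Icc 0 R := uIcc_of_le (by linarith)
  have hprim := intervalIntegral.continuousOn_primitive_interval'
    (intervalIntegrable_log_div hγ hΦpos hlog le_rfl (by linarith : 0 ≤ R)).abs
    (show γ ∈ uIcc 0 R by rw [hR]; constructor <;> linarith)
  rw [hR] at hprim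
  have hnhds : Icc 0 R ∈ 𝓝[Ici 0] x :=
    Ici_inter_Iic (a := (0 : ℝ)) ▸ inter_mem_nhdsWithin _ (Iic_mem_nhds (by linarith))
  exact ((hprim x ⟨hx, by linarith⟩).mono_of_mem_nhdsWithin hnhds).congr
    (fun ξ hξ => psiSigned_eq_integral_abs hγ hΦpos hmono hξ)
    (psiSigned_eq_integral_abs hγ hΦpos hmono hx)

theorem tendsto_psiSigned_atTop (hγ : 0 < γ) (hΦpos : ∀ ξ : ℝ, 0 < ξ → 0 < Φ ξ)
    (hlog : ∀ R : ℝ, 0 < R → IntervalIntegrable (fun s => Real.log (Φ s)) volume 0 R)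
    (hmono : StrictMonoOn Φ (Ici 0)) :
    Tendsto (PsiSigned Φ γ) atTop atTop := by
  have hg := strictMonoOn_log_div hγ hΦpos hmono
  have h2γ : 0 < 2 * γ := by positivity
  set ε := Real.log (Φ (2 * γ) / Φ γ)
  have hε : 0 < ε := Real.log_div_self (Φ γ) ▸ hg hγ h2γ (by linarith)
  have hlin (ξ : ℝ) (hξ : 2 * γ ≤ ξ) : ε * (ξ - 2 * γ) ≤ PsiSigned Φ γ ξ := by
    have hint {u v : ℝ} (hu : 0 ≤ u) (hv : 0 ≤ v) :=
      (intervalIntegrable_log_div hγ hΦpos hlog hu hv).abs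
    rw [psiSigned_eq_integral_abs hγ hΦpos hmono (h2γ.le.trans hξ),
      ← intervalIntegral.integral_add_adjacent_intervals (hint hγ.le h2γ.le)
        (hint h2γ.le (h2γ.le.trans hξ))]
    have hhead : 0 ≤ ∫ s in γ..2 * γ, |Real.log (Φ s / Φ γ)| :=
      intervalIntegral.integral_nonneg (by linarith) fun _ _ => abs_nonneg _
    have htail : ε * (ξ - 2 * γ) ≤ ∫ s in 2 * γ..ξ, |Real.log (Φ s / Φ γ)| :=
      calc ε * (ξ - 2 * γ) = ∫ _ in 2 * γ..ξ, ε := by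
            rw [intervalIntegral.integral_const, smul_eq_mul, mul_comm]
        _ ≤ _ := intervalIntegral.integral_mono_on hξ intervalIntegrable_const
            (hint h2γ.le (h2γ.le.trans hξ))
            fun s hs => (hg.monotoneOn h2γ (h2γ.trans_le hs.1) hs.1).trans (le_abs_self _)
    linarith
  refine tendsto_atTop_mono' _ ((eventually_ge_atTop (2 * γ)).mono hlin) ?_
  simpa only [sub_eq_add_neg, id] using
    (tendsto_atTop_add_const_right _ (-(2 * γ)) tendsto_id).const_mul_atTop hε

theorem exists_orderIso_psiSigned (hγ : 0 < γ) (hΦpos : ∀ ξ : ℝ, 0 < ξ → 0 < Φ ξ)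
    (hlog : ∀ R : ℝ, 0 < R → IntervalIntegrable (fun s => Real.log (Φ s)) volume 0 R)
    (hmono : StrictMonoOn Φ (Ici 0)) :
    ∃ e : ℝ ≃o ℝ, EqOn e (PsiSigned Φ γ) (Ici 0) ∧ ∀ ξ, 0 ≤ ξ → Psi Φ γ ξ = |e ξ| := by
  obtain ⟨e, he⟩ := exists_orderIso_eqOn_Ici (strictMonoOn_psiSigned hγ hΦpos hlog hmono)
    (continuousOn_psiSigned hγ hΦpos hlog hmono) (tendsto_psiSigned_atTop hγ hΦpos hlog hmono)
  exact ⟨e, he, fun ξ hξ => he hξ ▸ psi_eq_abs_psiSigned hγ hΦpos hmono hξ⟩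

end PsiSigned

theorem MeasureTheory.Lp.isClosed_setOf_ae_mem {α E : Type*} [MeasurableSpace α]
    {μ : Measure α} [NormedAddCommGroup E] {p : ENNReal} [Fact (1 ≤ p)] {s : Set E}
    (hs : IsClosed s) : IsClosed {f : Lp E p μ | ∀ᵐ x ∂μ, f x ∈ s} := by
  refine IsSeqClosed.isClosed fun f f₀ hf hlim => ?_
  obtain ⟨φ, -, hφ⟩ := (tendstoInMeasure_of_tendsto_Lp hlim).exists_seq_tendsto_ae
  filter_upwards [ae_all_iff.2 hf, hφ] with x hfx hφx
  exact hs.mem_of_tendsto hφx (Eventually.of_forall fun n => hfx _)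

theorem integrable_psi_comp_iff {Φ : ℝ → ℝ} {γ : ℝ} (e : ℝ ≃o ℝ)
    (hpsi : ∀ ξ, 0 ≤ ξ → Psi Φ γ ξ = |e ξ|) {α : Type*} [MeasurableSpace α] {μ : Measure α}
    {ρ : α → ℝ} (hρm : AEStronglyMeasurable ρ μ) (hρ : ∀ᵐ x ∂μ, 0 ≤ ρ x) :
    Integrable (fun x => Psi Φ γ (ρ x)) μ ↔ Integrable (fun x => e (ρ x)) μ := by
  rw [integrable_congr (hρ.mono fun x hx => hpsi _ hx)]
  exact integrable_norm_iff (e.continuous.comp_aestronglyMeasurable hρm)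

section Embedding

variable {d : ℕ} {Φ : ℝ → ℝ} {γ : ℝ} (e : ℝ ≃o ℝ) (hpsi : ∀ ξ, 0 ≤ ξ → Psi Φ γ ξ = |e ξ|)

noncomputable def Ent.toL1 (ρ : Ent d Φ γ) : EuclideanSpace ℝ (Fin d) →₁[volume] ℝ :=
  ((integrable_psi_comp_iff e hpsi ρ.1.aestronglyMeasurable ρ.2.1).1 ρ.2.2).toL1 _

theorem Ent.coeFn_toL1 (ρ : Ent d Φ γ) : Ent.toL1 e hpsi ρ =ᵐ[volume] fun x => e (ρ.1 x) :=
  Integrable.coeFn_toL1 _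

theorem Ent.toL1_injective : Function.Injective (Ent.toL1 (d := d) e hpsi) := by
  intro f g hfg
  have h := (Ent.coeFn_toL1 e hpsi f).symm.trans (hfg ▸ Ent.coeFn_toL1 e hpsi g)
  refine Subtype.ext (AEEqFun.ext ?_)
  filter_upwards [h] with x hx
  exact e.injective hx

theorem Ent.range_toL1 :
    range (Ent.toL1 (d := d) e hpsi) = {h | ∀ᵐ x ∂volume, h x ∈ Ici (e 0)} := by
  refine Subset.antisymm ?_ fun h (hh : ∀ᵐ x ∂volume, e 0 ≤ h x) => ?_
  · rintro _ ⟨ρ, rfl⟩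
    filter_upwards [Ent.coeFn_toL1 e hpsi ρ, ρ.2.1] with x hx hρx
    exact hx ▸ e.monotone hρx
  set ρ := AEEqFun.mk (fun x => e.symm (h x))
    (e.symm.continuous.comp_aestronglyMeasurable (Lp.aestronglyMeasurable h))
  have hρ : ρ =ᵐ[volume] fun x => e.symm (h x) := AEEqFun.coeFn_mk _ _
  have hρ0 : ∀ᵐ x ∂volume, 0 ≤ ρ x := by
    filter_upwards [hρ, hh] with x hx hhx
    rw [hx, ← e.symm_apply_apply 0]
    exact e.symm.monotone hhx
  have heρ : (fun x => e (ρ x)) =ᵐ[volume] h := by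
    filter_upwards [hρ] with x hx
    rw [hx, e.apply_symm_apply]
  refine ⟨⟨ρ, hρ0, (integrable_psi_comp_iff e hpsi ρ.aestronglyMeasurable hρ0).2
    ((L1.integrable_coeFn h).congr heρ.symm)⟩, Lp.ext ((Ent.coeFn_toL1 e hpsi _).trans heρ)⟩

theorem Ent.abs_psiSigned_sub_ae_eq (he : EqOn e (PsiSigned Φ γ) (Ici 0)) (f g : Ent d Φ γ) :
    (fun x => |PsiSigned Φ γ (f.1 x) - PsiSigned Φ γ (g.1 x)|)
      =ᵐ[volume] fun x => ‖(Ent.toL1 e hpsi f - Ent.toL1 e hpsi g) x‖ := by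
  filter_upwards [Lp.coeFn_sub (Ent.toL1 e hpsi f) (Ent.toL1 e hpsi g), Ent.coeFn_toL1 e hpsi f,
    Ent.coeFn_toL1 e hpsi g, f.2.1, g.2.1] with x hsub hf hg hf0 hg0
  rw [hsub, Pi.sub_apply, hf, hg, he hf0, he hg0, Real.norm_eq_abs]

end Embedding

theorem stmt3_general (d : ℕ) (Φ : ℝ → ℝ) (γ : ℝ) (hγ : 0 < γ)
    (hΦpos : ∀ ξ : ℝ, 0 < ξ → 0 < Φ ξ)
    (hlog : ∀ R : ℝ, 0 < R →
      IntervalIntegrable (fun s => Real.log (Φ s)) volume 0 R)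
    (hmono : StrictMonoOn Φ (Set.Ici 0)) :
    ∃ m : MetricSpace (Ent d Φ γ),
      (∀ f g : Ent d Φ γ,
        Integrable (fun x => |PsiSigned Φ γ (f.1 x) - PsiSigned Φ γ (g.1 x)|) volume ∧
        @Dist.dist _ m.toDist f g
          = ∫ x, |PsiSigned Φ γ (f.1 x) - PsiSigned Φ γ (g.1 x)|) ∧
      @CompleteSpace _ m.toUniformSpace ∧
      @TopologicalSpace.SeparableSpace _ m.toUniformSpace.toTopologicalSpace := by
  obtain ⟨e, he, hpsi⟩ := exists_orderIso_psiSigned hγ hΦpos hlog hmono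
  let m : MetricSpace (Ent d Φ γ) :=
    MetricSpace.induced (Ent.toL1 e hpsi) (Ent.toL1_injective e hpsi) inferInstance
  have hT : IsUniformInducing (Ent.toL1 (d := d) e hpsi) :=
    (MetricSpace.isometry_induced _ (Ent.toL1_injective e hpsi)).isUniformInducing
  refine ⟨m, fun f g => ?_, ?_, ?_⟩
  · have h := Ent.abs_psiSigned_sub_ae_eq e hpsi he f g
    refine ⟨(L1.integrable_coeFn _).norm.congr h.symm, ?_⟩
    rw [integral_congr_ae h, ← L1.norm_eq_integral_norm, ← dist_eq_norm]
    rfl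
  · rw [completeSpace_iff_isComplete_range hT, Ent.range_toL1]
    exact (Lp.isClosed_setOf_ae_mem isClosed_Ici).isComplete
  · have : Fact ((1 : ENNReal) ≠ ⊤) := ⟨ENNReal.one_ne_top⟩
    have := hT.isInducing.secondCountableTopology
    infer_instance

theorem stmt3 (d : ℕ) (Φ : ℝ → ℝ) (γ : ℝ) (hγ : 0 < γ)
    (hΦc : ContinuousOn Φ (Set.Ici 0)) (hΦ0 : Φ 0 = 0)
    (hΦpos : ∀ ξ : ℝ, 0 < ξ → 0 < Φ ξ)
    (hlog : ∀ R : ℝ, 0 < R →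
      IntervalIntegrable (fun s => Real.log (Φ s)) volume 0 R)
    (hmono : StrictMonoOn Φ (Set.Ici 0)) :
    ∃ m : MetricSpace (Ent d Φ γ),
      (∀ f g : Ent d Φ γ,
        Integrable (fun x => |PsiSigned Φ γ (f.1 x) - PsiSigned Φ γ (g.1 x)|) volume ∧
        @Dist.dist _ m.toDist f g
          = ∫ x, |PsiSigned Φ γ (f.1 x) - PsiSigned Φ γ (g.1 x)|) ∧
      @CompleteSpace _ m.toUniformSpace ∧
      @TopologicalSpace.SeparableSpace _ m.toUniformSpace.toTopologicalSpace :=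
  stmt3_general d Φ γ hγ hΦpos hlog hmono
end

section
/- For A > 0 define h_A : ℝ^d → ℝ by h_A(x) = √(1 − exp(−A|x|²)). Then h_A is differentiable on ℝ^d ∖ {0} with ∇h_A(x) = A x exp(−A|x|²)(1 − exp(−A|x|²))^{−1/2}, and for every p ∈ [1,∞) and d ∈ ℕ there exists c_{p,d} ∈ (0,∞) such that for every A > 0, (∫_{ℝ^d} |∇h_A(x)|^p dx)^{1/p} ≤ c_{p,d} A^{1/2 − d/(2p)}. Moreover there exists c_d ∈ (0,∞) such that sup_{x ≠ 0} |∇h_A(x)| ≤ c_d A^{1/2} for every A > 0. -/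
/-!
Away from the origin the chain rule gives `∇h_A(x) = c(x) • x`, and the elementary inequality
`u e^{-u} ≤ 1 - e^{-u}` (i.e. `e^u ≥ 1 + u`) at `u = A|x|²` turns this into the pointwise bound
`|∇h_A(x)|² ≤ A e^{-A|x|²}`. At the origin `h_A` is even, so its gradient there vanishes whether
or not `h_A` is differentiable, and the bound holds everywhere. The sup bound is then immediate,
and the `L^p` bound is the Gaussian integral of `A^{p/2} e^{-pA|x|²/2}`.
-/

open MeasureTheory

/-- The spatial cutoff `h_A(x) = √(1 − exp(−A|x|²))`. -/
noncomputable def hcut (d : ℕ) (A : ℝ) (x : EuclideanSpace ℝ (Fin d)) : ℝ :=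
  Real.sqrt (1 - Real.exp (-A * ‖x‖ ^ 2))

theorem Function.Even.fderiv_zero {E F : Type*}
    [NormedAddCommGroup E] [NormedSpace ℝ E] [NormedAddCommGroup F] [NormedSpace ℝ F]
    {f : E → F} (hf : f.Even) : fderiv ℝ f 0 = 0 := by
  by_cases h : DifferentiableAt ℝ f 0
  · have hf' : HasFDerivAt f (fderiv ℝ f 0) (-0) := by rw [neg_zero]; exact h.hasFDerivAt
    have hneg := hf'.comp (0 : E) (hasFDerivAt_id (0 : E)).neg
    rw [show f ∘ Neg.neg = f from funext hf] at hneg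
    have hD : fderiv ℝ f 0 = -fderiv ℝ f 0 := by simpa using h.hasFDerivAt.unique hneg
    rw [eq_neg_iff_add_eq_zero, ← two_smul ℝ, smul_eq_zero] at hD
    exact hD.resolve_left two_ne_zero
  · exact fderiv_zero_of_not_differentiableAt h

theorem Real.mul_exp_neg_le_one_sub_exp_neg (u : ℝ) :
    u * Real.exp (-u) ≤ 1 - Real.exp (-u) := by
  have h := Real.add_one_le_exp u
  have : Real.exp u * Real.exp (-u) = 1 := by rw [← Real.exp_add]; simp
  nlinarith [Real.exp_pos (-u)]

theorem Real.rpow_neg_one_div_two {x : ℝ} (hx : 0 ≤ x) : x ^ (-(1:ℝ)/2) = (√x)⁻¹ := by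
  rw [neg_div, Real.rpow_neg hx, Real.sqrt_eq_rpow]

theorem lintegral_ofReal_exp_neg_mul_sq_norm {V : Type*} [NormedAddCommGroup V]
    [InnerProductSpace ℝ V] [FiniteDimensional ℝ V] [MeasurableSpace V] [BorelSpace V]
    {b : ℝ} (hb : 0 < b) :
    ∫⁻ v : V, ENNReal.ofReal (Real.exp (-b * ‖v‖ ^ 2))
      = ENNReal.ofReal ((Real.pi / b) ^ (Module.finrank ℝ V / 2 : ℝ)) := by
  have hint : Integrable (fun v : V => Real.exp (-b * ‖v‖ ^ 2)) := by
    refine (GaussianFourier.integrable_cexp_neg_mul_sq_norm_add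
      (V := V) (b := (b : ℂ)) (by simpa using hb) 0 0).norm.congr (.of_forall fun v => ?_)
    simp [Complex.norm_exp, ← Complex.ofReal_pow]
  rw [← ofReal_integral_eq_lintegral_ofReal hint (.of_forall fun v => by positivity),
    GaussianFourier.integral_rexp_neg_mul_sq_norm hb]

section hcut

variable {d : ℕ} {A : ℝ}

theorem hcut_even : (hcut d A).Even := fun x => by simp only [hcut, norm_neg]

theorem gradient_hcut_zero : gradient (hcut d A) 0 = 0 := by
  simp [gradient, hcut_even.fderiv_zero]

theorem one_sub_exp_neg_mul_sq_norm_pos (hA : 0 < A) {x : EuclideanSpace ℝ (Fin d)}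
    (hx : x ≠ 0) :
    0 < 1 - Real.exp (-A * ‖x‖ ^ 2) := by
  have : 0 < A * ‖x‖ ^ 2 := by positivity
  exact sub_pos.mpr (Real.exp_lt_one_iff.mpr (by linarith))

theorem hasGradientAt_hcut (hA : 0 < A) {x : EuclideanSpace ℝ (Fin d)} (hx : x ≠ 0) :
    HasGradientAt (hcut d A)
      ((A * Real.exp (-A * ‖x‖ ^ 2) * (1 - Real.exp (-A * ‖x‖ ^ 2)) ^ (-(1:ℝ)/2)) • x) x := by
  have hs := one_sub_exp_neg_mul_sq_norm_pos hA hx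
  have hsq : HasFDerivAt (fun y : EuclideanSpace ℝ (Fin d) => ‖y‖ ^ 2) (2 • innerSL ℝ x) x := by
    simpa using (hasFDerivAt_id x).norm_sq
  have hs' := (((hsq.const_mul (-A)).exp).const_sub 1).sqrt hs.ne'
  rw [hasGradientAt_iff_hasFDerivAt]
  refine hs'.congr_fderiv (ContinuousLinearMap.ext fun y => ?_)
  have hsqrt : Real.sqrt (1 - Real.exp (-A * ‖x‖ ^ 2)) ≠ 0 := by positivity
  simp only [InnerProductSpace.toDual_apply_apply, smul_apply,
    neg_apply, innerSL_apply_apply, smul_eq_mul, real_inner_smul_left,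
    Real.rpow_neg_one_div_two hs.le]
  field_simp
  ring

theorem norm_gradient_hcut_sq_le (hA : 0 < A) (x : EuclideanSpace ℝ (Fin d)) :
    ‖gradient (hcut d A) x‖ ^ 2 ≤ A * Real.exp (-A * ‖x‖ ^ 2) := by
  rcases eq_or_ne x 0 with rfl | hx
  · simp [gradient_hcut_zero, hA.le]
  have hs := one_sub_exp_neg_mul_sq_norm_pos hA hx
  have hu := Real.mul_exp_neg_le_one_sub_exp_neg (A * ‖x‖ ^ 2)
  rw [← neg_mul] at hu
  rw [(hasGradientAt_hcut hA hx).gradient, norm_smul, Real.norm_eq_abs, mul_pow, sq_abs,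
    Real.rpow_neg_one_div_two hs.le, mul_pow, inv_pow, Real.sq_sqrt hs.le]
  calc (A * Real.exp (-A * ‖x‖ ^ 2)) ^ 2 * (1 - Real.exp (-A * ‖x‖ ^ 2))⁻¹ * ‖x‖ ^ 2
      = A * Real.exp (-A * ‖x‖ ^ 2) *
          (A * ‖x‖ ^ 2 * Real.exp (-A * ‖x‖ ^ 2) / (1 - Real.exp (-A * ‖x‖ ^ 2))) := by ring
    _ ≤ A * Real.exp (-A * ‖x‖ ^ 2) * 1 := by gcongr; exact (div_le_one hs).mpr hu
    _ = A * Real.exp (-A * ‖x‖ ^ 2) := mul_one _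

theorem norm_gradient_hcut_le_sqrt (hA : 0 < A) (x : EuclideanSpace ℝ (Fin d)) :
    ‖gradient (hcut d A) x‖ ≤ √A := by
  refine Real.le_sqrt_of_sq_le ((norm_gradient_hcut_sq_le hA x).trans ?_)
  exact mul_le_of_le_one_right hA.le (Real.exp_le_one_iff.mpr (by nlinarith [sq_nonneg ‖x‖]))

theorem norm_gradient_hcut_rpow_le (hA : 0 < A) {p : ℝ} (hp : 0 ≤ p)
    (x : EuclideanSpace ℝ (Fin d)) :
    ‖gradient (hcut d A) x‖ ^ p ≤ A ^ (p / 2) * Real.exp (-(p * A / 2) * ‖x‖ ^ 2) :=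
  calc ‖gradient (hcut d A) x‖ ^ p = (‖gradient (hcut d A) x‖ ^ 2) ^ (p / 2) := by
        rw [← Real.rpow_natCast, ← Real.rpow_mul (norm_nonneg _)]; ring_nf
    _ ≤ (A * Real.exp (-A * ‖x‖ ^ 2)) ^ (p / 2) := by
        gcongr; exact norm_gradient_hcut_sq_le hA x
    _ = A ^ (p / 2) * Real.exp (-(p * A / 2) * ‖x‖ ^ 2) := by
        rw [Real.mul_rpow hA.le (Real.exp_pos _).le, ← Real.exp_mul]; ring_nf

theorem lintegral_norm_gradient_hcut_rpow_le (hA : 0 < A) {p : ℝ} (hp : 0 < p) :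
    ∫⁻ x, ENNReal.ofReal (‖gradient (hcut d A) x‖ ^ p)
      ≤ ENNReal.ofReal ((2 * Real.pi / p) ^ ((d : ℝ) / 2) * A ^ (p / 2 - (d : ℝ) / 2)) := by
  have hconst : A ^ (p / 2) * (Real.pi / (p * A / 2)) ^ ((d : ℝ) / 2)
      = (2 * Real.pi / p) ^ ((d : ℝ) / 2) * A ^ (p / 2 - (d : ℝ) / 2) := by
    rw [show Real.pi / (p * A / 2) = 2 * Real.pi / p * A⁻¹ by field_simp,
      Real.mul_rpow (by positivity) (by positivity), Real.inv_rpow hA.le, Real.rpow_sub hA]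
    ring
  calc ∫⁻ x, ENNReal.ofReal (‖gradient (hcut d A) x‖ ^ p)
      ≤ ∫⁻ x : EuclideanSpace ℝ (Fin d), ENNReal.ofReal (A ^ (p / 2)) *
          ENNReal.ofReal (Real.exp (-(p * A / 2) * ‖x‖ ^ 2)) := by
        refine lintegral_mono fun x => ?_
        rw [← ENNReal.ofReal_mul (by positivity)]
        exact ENNReal.ofReal_le_ofReal (norm_gradient_hcut_rpow_le hA hp.le x)
    _ = ENNReal.ofReal ((2 * Real.pi / p) ^ ((d : ℝ) / 2) * A ^ (p / 2 - (d : ℝ) / 2)) := by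
        rw [lintegral_const_mul' _ _ ENNReal.ofReal_ne_top,
          lintegral_ofReal_exp_neg_mul_sq_norm (by positivity), finrank_euclideanSpace_fin,
          ← ENNReal.ofReal_mul (by positivity), hconst]

theorem lintegral_norm_gradient_hcut_rpow_rpow_inv_le (hA : 0 < A) {p : ℝ} (hp : 0 < p) :
    (∫⁻ x, ENNReal.ofReal (‖gradient (hcut d A) x‖ ^ p)) ^ (1 / p)
      ≤ ENNReal.ofReal ((2 * Real.pi / p) ^ ((d : ℝ) / (2 * p)) *
          A ^ ((1 : ℝ) / 2 - (d : ℝ) / (2 * p))) := by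
  refine (ENNReal.rpow_le_rpow (lintegral_norm_gradient_hcut_rpow_le hA hp)
    (by positivity)).trans_eq ?_
  rw [ENNReal.ofReal_rpow_of_nonneg (by positivity) (by positivity),
    Real.mul_rpow (by positivity) (by positivity), ← Real.rpow_mul (by positivity),
    ← Real.rpow_mul hA.le]
  congr 3 <;> field_simp

end hcut

/-- `h_A` is differentiable away from the origin with gradient
`A x exp(−A|x|²)(1 − exp(−A|x|²))^{−1/2}`, its gradient satisfies the `L^p` bound
`‖∇h_A‖_{L^p} ≤ c_{p,d} A^{1/2 − d/(2p)}`, and the uniform bound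
`|∇h_A(x)| ≤ c_d A^{1/2}`. -/
theorem stmt8 (d : ℕ) :
    (∀ A : ℝ, 0 < A → ∀ x : EuclideanSpace ℝ (Fin d), x ≠ 0 →
      HasGradientAt (hcut d A)
        ((A * Real.exp (-A * ‖x‖ ^ 2) * (1 - Real.exp (-A * ‖x‖ ^ 2)) ^ (-(1:ℝ)/2)) • x)
        x) ∧
    (∀ p : ℝ, 1 ≤ p → ∃ c : ℝ, 0 < c ∧ ∀ A : ℝ, 0 < A →
      (∫⁻ x : EuclideanSpace ℝ (Fin d),
          ENNReal.ofReal (‖gradient (hcut d A) x‖ ^ p)) ^ (1/p)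
        ≤ ENNReal.ofReal (c * A ^ ((1:ℝ)/2 - (d:ℝ)/(2*p)))) ∧
    (∃ c : ℝ, 0 < c ∧ ∀ A : ℝ, 0 < A → ∀ x : EuclideanSpace ℝ (Fin d), x ≠ 0 →
      ‖gradient (hcut d A) x‖ ≤ c * A ^ ((1:ℝ)/2)) := by
  refine ⟨fun A hA x hx => hasGradientAt_hcut hA hx, fun p hp => ?_, ?_⟩
  · have hp0 : 0 < p := one_pos.trans_le hp
    exact ⟨_, by positivity, fun A hA => lintegral_norm_gradient_hcut_rpow_rpow_inv_le hA hp0⟩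
  · refine ⟨1, one_pos, fun A hA x _ => ?_⟩
    rw [one_mul, ← Real.sqrt_eq_rpow]
    exact norm_gradient_hcut_le_sqrt hA x
end

section
/- Let σ:[0,∞)→ℝ be continuous and satisfy, for some c ∈ [1,∞), sup_{ξ′∈[0,ξ]} σ²(ξ′) ≤ c(1 + ξ + σ²(ξ)) for every ξ ∈ [0,∞). Let T > 0 and let ρ : ℝ^d × [0,T] → [0,∞) be measurable with ess sup_{t∈[0,T]} ‖ρ(·,t)‖_{L¹(ℝ^d)} < ∞ and with σ∘ρ ∈ L²_loc(ℝ^d × [0,T]). Then for every R > 0, lim_{M→∞} ∫_0^T ∫_{B_R} ( sup_{ξ ∈ [M, min(M+1, ρ(x,t))]} |σ(ξ)| )² · 𝟙_{ρ(x,t) > M} dx dt = 0; that is, sup_{ξ∈[M,(M+1)∧ρ]} |σ(ξ)| 𝟙_{ρ>M} → 0 strongly in L²_loc(ℝ^d × [0,T]) as M → ∞. -/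
/-!
For `M ≥ 0` the growth condition bounds the squared supremum of `|σ|` over `[M, (M+1) ∧ ρ]`
by `c (1 + ρ + σ(ρ)²)`, which is integrable on `B_R × [0,T]` because `ρ ∈ L^∞_t L¹_x` and
`σ∘ρ ∈ L²_loc`. At each point the integrand vanishes as soon as `M ≥ ρ`, so dominated
convergence gives the limit `0`.
-/

open MeasureTheory Set Filter Topology

-- `sup_{ξ ∈ [M, (M+1) ∧ r]} |σ ξ|`; an empty window (`r < M`) gives `sSup ∅ = 0`.
noncomputable def windowSup (σ : ℝ → ℝ) (M r : ℝ) : ℝ :=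
  sSup ((fun ξ => |σ ξ|) '' Icc M (min (M + 1) r))

section WindowSup

variable {σ : ℝ → ℝ} {M r B : ℝ}

lemma windowSup_nonneg : 0 ≤ windowSup σ M r :=
  Real.sSup_nonneg <| by rintro _ ⟨ξ, -, rfl⟩; exact abs_nonneg _

lemma windowSup_sq_le (hB : 0 ≤ B) (h : ∀ ξ ∈ Icc M (min (M + 1) r), σ ξ ^ 2 ≤ B) :
    windowSup σ M r ^ 2 ≤ B := by
  have hle : windowSup σ M r ≤ √B :=
    Real.sSup_le (by rintro _ ⟨ξ, hξ, rfl⟩; exact Real.abs_le_sqrt (h ξ hξ)) (Real.sqrt_nonneg B)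
  calc windowSup σ M r ^ 2 ≤ √B ^ 2 := pow_le_pow_left₀ windowSup_nonneg hle 2
    _ = B := Real.sq_sqrt hB

lemma windowSup_mono (hbdd : ∀ r, BddAbove ((fun ξ => |σ ξ|) '' Icc M (min (M + 1) r))) :
    Monotone (windowSup σ M) := by
  intro r r' hrr'
  have hsub : (fun ξ => |σ ξ|) '' Icc M (min (M + 1) r) ⊆
      (fun ξ => |σ ξ|) '' Icc M (min (M + 1) r') :=
    image_mono (Icc_subset_Icc_right (min_le_min le_rfl hrr'))
  rcases ((fun ξ => |σ ξ|) '' Icc M (min (M + 1) r)).eq_empty_or_nonempty with hempty | hne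
  · rw [windowSup, hempty, Real.sSup_empty]
    exact windowSup_nonneg
  · exact csSup_le_csSup (hbdd r') hne hsub

end WindowSup

section Growth

variable {σ : ℝ → ℝ} {c : ℝ}

lemma bddAbove_abs_image_Icc_of_growth
    (hgrowth : ∀ ξ : ℝ, 0 ≤ ξ → ∀ ξ' ∈ Icc 0 ξ, σ ξ' ^ 2 ≤ c * (1 + ξ + σ ξ ^ 2))
    {a : ℝ} (ha : 0 ≤ a) (b : ℝ) :
    BddAbove ((fun ξ => |σ ξ|) '' Icc a b) := by
  set b' := max b 0
  refine ⟨√(c * (1 + b' + σ b' ^ 2)), ?_⟩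
  rintro _ ⟨ξ, hξ, rfl⟩
  exact Real.abs_le_sqrt <| hgrowth b' (le_max_right b 0) ξ
    ⟨ha.trans hξ.1, hξ.2.trans (le_max_left b 0)⟩

lemma windowSup_sq_le_of_growth
    (hgrowth : ∀ ξ : ℝ, 0 ≤ ξ → ∀ ξ' ∈ Icc 0 ξ, σ ξ' ^ 2 ≤ c * (1 + ξ + σ ξ ^ 2))
    {M r : ℝ} (hM : 0 ≤ M) (hr : 0 ≤ r) :
    windowSup σ M r ^ 2 ≤ c * (1 + r + σ r ^ 2) :=
  windowSup_sq_le ((sq_nonneg _).trans (hgrowth r hr r ⟨hr, le_rfl⟩))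
    fun ξ hξ => hgrowth r hr ξ ⟨hM.trans hξ.1, hξ.2.trans (min_le_right _ _)⟩

lemma measurable_windowSup_of_growth
    (hgrowth : ∀ ξ : ℝ, 0 ≤ ξ → ∀ ξ' ∈ Icc 0 ξ, σ ξ' ^ 2 ≤ c * (1 + ξ + σ ξ ^ 2))
    {M : ℝ} (hM : 0 ≤ M) : Measurable (windowSup σ M) :=
  (windowSup_mono fun _ => bddAbove_abs_image_Icc_of_growth hgrowth hM _).measurable

end Growth

lemma integrable_uncurry_of_ae_integral_le {α β : Type*} [MeasurableSpace α] [MeasurableSpace β]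
    {μ : Measure α} {ν : Measure β} [SFinite μ] [IsFiniteMeasure ν] {f : α → β → ℝ}
    (hf : Measurable (Function.uncurry f)) (hf0 : ∀ x t, 0 ≤ f x t)
    (hC : ∃ C : ℝ, ∀ᵐ t ∂ν, Integrable (fun x => f x t) μ ∧ ∫ x, f x t ∂μ ≤ C) :
    Integrable (Function.uncurry f) (μ.prod ν) := by
  obtain ⟨C, hC⟩ := hC
  refine (integrable_prod_iff' hf.aestronglyMeasurable).2 ⟨hC.mono fun t ht => ht.1, ?_⟩
  refine Integrable.mono' (integrable_const C)
    hf.norm.stronglyMeasurable.integral_prod_left'.aestronglyMeasurable ?_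
  filter_upwards [hC] with t ht
  simp only [Function.uncurry_apply_pair, Real.norm_eq_abs, abs_of_nonneg (hf0 _ t)]
  rw [abs_of_nonneg (integral_nonneg fun x => hf0 x t)]
  exact ht.2

lemma tendsto_integral_indicator_lt_atTop {α : Type*} [MeasurableSpace α] {μ : Measure α}
    {g : α → ℝ} {F : ℝ → α → ℝ} (bound : α → ℝ) (hg : Measurable g)
    (hF : ∀ᶠ M in atTop, AEStronglyMeasurable (F M) μ)
    (hFb : ∀ᶠ M in atTop, ∀ᵐ p ∂μ, ‖F M p‖ ≤ bound p) (hb : Integrable bound μ) :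
    Tendsto (fun M => ∫ p, {q | M < g q}.indicator (F M) p ∂μ) atTop (𝓝 0) := by
  have hlim : ∀ p, Tendsto (fun M => {q | M < g q}.indicator (F M) p) atTop (𝓝 0) := fun p =>
    tendsto_const_nhds.congr' <| (eventually_ge_atTop (g p)).mono fun M hM =>
      (indicator_of_notMem (s := {q | M < g q}) (not_lt.2 hM) _).symm
  simpa using tendsto_integral_filter_of_dominated_convergence bound
    (hF.mono fun M hM => hM.indicator (measurableSet_lt measurable_const hg))
    (hFb.mono fun M hM => hM.mono fun p hp => (norm_indicator_le_norm_self _ _).trans hp)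
    hb (ae_of_all _ hlim)

theorem stmt12_general (d : ℕ) (T : ℝ) (c : ℝ)
    (σ : ℝ → ℝ)
    (hgrowth : ∀ ξ : ℝ, 0 ≤ ξ → ∀ ξ' ∈ Set.Icc 0 ξ, σ ξ' ^ 2 ≤ c * (1 + ξ + σ ξ ^ 2))
    (ρ : EuclideanSpace ℝ (Fin d) → ℝ → ℝ)
    (hρmeas : Measurable (Function.uncurry ρ))
    (hρnonneg : ∀ x t, 0 ≤ ρ x t)
    (hρL1 : ∃ C : ℝ, ∀ᵐ t ∂(volume.restrict (Set.Icc (0:ℝ) T)),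
      Integrable (fun x => ρ x t) volume ∧ ∫ x, ρ x t ≤ C)
    (hσρ : ∀ R : ℝ, 0 < R →
      IntegrableOn (fun p : EuclideanSpace ℝ (Fin d) × ℝ => σ (ρ p.1 p.2) ^ 2)
        ((Metric.ball (0 : EuclideanSpace ℝ (Fin d)) R) ×ˢ Set.Icc (0:ℝ) T) volume) :
    ∀ R : ℝ, 0 < R →
      Filter.Tendsto (fun M : ℝ =>
        ∫ p in (Metric.ball (0 : EuclideanSpace ℝ (Fin d)) R) ×ˢ Set.Icc (0:ℝ) T,
          Set.indicator {q : EuclideanSpace ℝ (Fin d) × ℝ | M < ρ q.1 q.2}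
            (fun q =>
              (sSup ((fun ξ => |σ ξ|) '' Set.Icc M (min (M+1) (ρ q.1 q.2)))) ^ 2) p)
        Filter.atTop (nhds 0) := by
  intro R hR
  have hfin : IsFiniteMeasure
      (volume.restrict (Metric.ball (0 : EuclideanSpace ℝ (Fin d)) R ×ˢ Icc 0 T)) :=
    isFiniteMeasure_restrict.2
      (Metric.isBounded_ball.prod (Metric.isBounded_Icc 0 T)).measure_lt_top.ne
  have hρint : IntegrableOn (Function.uncurry ρ) (Metric.ball 0 R ×ˢ Icc 0 T) := by
    refine (integrable_uncurry_of_ae_integral_le hρmeas hρnonneg hρL1).mono_measure ?_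
    rw [Measure.volume_eq_prod, ← Measure.prod_restrict]
    exact Measure.prod_mono Measure.restrict_le_self le_rfl
  refine tendsto_integral_indicator_lt_atTop (g := Function.uncurry ρ)
    (F := fun M p => windowSup σ M (ρ p.1 p.2) ^ 2)
    (fun p => c * (1 + ρ p.1 p.2 + σ (ρ p.1 p.2) ^ 2))
    hρmeas ?_ ?_ ((((integrable_const 1).add hρint).add (hσρ R hR)).const_mul c)
  · filter_upwards [eventually_ge_atTop 0] with M hM
    exact ((measurable_windowSup_of_growth hgrowth hM).comp hρmeas).pow_const 2
      |>.aestronglyMeasurable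
  · filter_upwards [eventually_ge_atTop 0] with M hM
    refine ae_of_all _ fun p => ?_
    rw [Real.norm_of_nonneg (sq_nonneg _)]
    exact windowSup_sq_le_of_growth hgrowth hM (hρnonneg p.1 p.2)

/-- If `σ` satisfies the growth condition `sup_{[0,ξ]} σ² ≤ c(1 + ξ + σ²(ξ))` and
`ρ ∈ L^∞_t L¹_x` is nonnegative with `σ∘ρ ∈ L²_loc`, then
`sup_{ξ∈[M,(M+1)∧ρ]} |σ(ξ)| 𝟙_{ρ>M} → 0` in `L²_loc(ℝ^d × [0,T])` as `M → ∞`. -/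
theorem stmt12 (d : ℕ) (T : ℝ) (hT : 0 < T) (c : ℝ) (hc : 1 ≤ c)
    (σ : ℝ → ℝ) (hσc : ContinuousOn σ (Set.Ici 0))
    (hgrowth : ∀ ξ : ℝ, 0 ≤ ξ → ∀ ξ' ∈ Set.Icc 0 ξ, σ ξ' ^ 2 ≤ c * (1 + ξ + σ ξ ^ 2))
    (ρ : EuclideanSpace ℝ (Fin d) → ℝ → ℝ)
    (hρmeas : Measurable (Function.uncurry ρ))
    (hρnonneg : ∀ x t, 0 ≤ ρ x t)
    (hρL1 : ∃ C : ℝ, ∀ᵐ t ∂(volume.restrict (Set.Icc (0:ℝ) T)),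
      Integrable (fun x => ρ x t) volume ∧ ∫ x, ρ x t ≤ C)
    (hσρ : ∀ R : ℝ, 0 < R →
      IntegrableOn (fun p : EuclideanSpace ℝ (Fin d) × ℝ => σ (ρ p.1 p.2) ^ 2)
        ((Metric.ball (0 : EuclideanSpace ℝ (Fin d)) R) ×ˢ Set.Icc (0:ℝ) T) volume) :
    ∀ R : ℝ, 0 < R →
      Filter.Tendsto (fun M : ℝ =>
        ∫ p in (Metric.ball (0 : EuclideanSpace ℝ (Fin d)) R) ×ˢ Set.Icc (0:ℝ) T,
          Set.indicator {q : EuclideanSpace ℝ (Fin d) × ℝ | M < ρ q.1 q.2}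
            (fun q =>
              (sSup ((fun ξ => |σ ξ|) '' Set.Icc M (min (M+1) (ρ q.1 q.2)))) ^ 2) p)
        Filter.atTop (nhds 0) :=
  stmt12_general d T c σ hgrowth ρ hρmeas hρnonneg hρL1 hσρ
end
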